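/- arXiv:math/0610131 — 2 statements merged into one kernel-verified Lean document; each statement's English description precedes it below -/
import Mathlib

section
/- Let φ : N × [0,1] → N × [0,1] be a homeomorphism with φ = id on N × {0} and suppose for δ > 0 there is an isotopy of N × [0,1] rel N × {0} compressing the support of φ into N × (1−δ, 1]: i.e., φ is isotopic rel N × {0} to a homeomorphism φ' that is the identity on N × [0, 1−δ]. If additionally φ moves points at most δ in the N coordinate, then φ' can be chosen to move points at most a distance (depending on δ, going to 0 with δ) in N × [0,1] with the product metric. -/
open unitInterval Set Filter

/-- `H` is an isotopy rel `N × {0}` from `f` to `g`. -/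
def IsotopyRelZero {N : Type*} [TopologicalSpace N]
    (H : (N × unitInterval) × unitInterval → N × unitInterval)
    (f g : N × unitInterval → N × unitInterval) : Prop :=
  Continuous H ∧
  (∀ s : unitInterval, IsHomeomorph fun p => H (p, s)) ∧
  (∀ s : unitInterval, ∀ x : N, H ((x, 0), s) = (x, 0)) ∧
  (∀ p, H (p, 0) = f p) ∧ (∀ p, H (p, 1) = g p)


noncomputable def squeezeConj {N : Type*} [TopologicalSpace N]
    (φ : (N × unitInterval) ≃ₜ N × unitInterval) (u : ℝ) (p : N × unitInterval) :
    N × unitInterval :=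
  if (p.2 : ℝ) ≤ u then p
  else
    ((φ (p.1, projIcc 0 1 zero_le_one (((p.2 : ℝ) - u) / (1 - u)))).1,
      projIcc 0 1 zero_le_one
        (u + (1 - u) * ((φ (p.1, projIcc 0 1 zero_le_one (((p.2 : ℝ) - u) / (1 - u)))).2 : ℝ)))

theorem squeezeConj_leftInv {N : Type*} [TopologicalSpace N]
    (φ : (N × unitInterval) ≃ₜ N × unitInterval)
    (hφ0 : ∀ x : N, φ (x, 0) = (x, 0)) {u : ℝ} (hu0 : 0 ≤ u) (hu1 : u < 1)
    (p : N × unitInterval) : squeezeConj φ u (squeezeConj φ.symm u p) = p := by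
  by_cases h : (p.2 : ℝ) ≤ u
  · have h1 : squeezeConj φ.symm u p = p := by rw [squeezeConj, if_pos h]
    rw [h1, squeezeConj, if_pos h]
  · push_neg at h
    have h1u : (0 : ℝ) < 1 - u := by linarith
    have hp1 : (p.2 : ℝ) ≤ 1 := p.2.2.2
    set r : ℝ := ((p.2 : ℝ) - u) / (1 - u) with hr
    have hr0 : 0 < r := div_pos (by linarith) h1u
    have hr1 : r ≤ 1 := (div_le_one h1u).2 (by linarith)
    have hrmem : r ∈ Icc (0 : ℝ) 1 := ⟨hr0.le, hr1⟩
    set τ : unitInterval := projIcc 0 1 zero_le_one r with hτdef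
    have hτ : (τ : ℝ) = r := by rw [hτdef, projIcc_of_mem _ hrmem]
    set q : N × unitInterval := φ.symm (p.1, τ) with hqdef
    have hφq : φ q = (p.1, τ) := φ.apply_symm_apply _
    have hq2 : 0 < (q.2 : ℝ) := by
      rcases lt_or_eq_of_le q.2.2.1 with h' | h'
      · exact_mod_cast h'
      · exfalso
        have hq0 : q = (q.1, 0) := by
          have : q.2 = 0 := by ext; exact h'.symm
          rw [← this]
        have h2 : φ q = (q.1, 0) := by rw [hq0]; exact hφ0 q.1
        rw [hφq] at h2
        have h3 : τ = 0 := congrArg Prod.snd h2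
        rw [← hτ, h3] at hr0
        norm_num at hr0
    have hq21 : (q.2 : ℝ) ≤ 1 := q.2.2.2
    have hinner : squeezeConj φ.symm u p =
        (q.1, projIcc 0 1 zero_le_one (u + (1 - u) * (q.2 : ℝ))) := by
      rw [squeezeConj, if_neg (not_le.2 h)]
    set t' : ℝ := u + (1 - u) * (q.2 : ℝ) with ht'def
    have ht'mem : t' ∈ Icc (0 : ℝ) 1 := ⟨by nlinarith, by nlinarith⟩
    have hπt' : ((projIcc 0 1 zero_le_one t' : unitInterval) : ℝ) = t' := by
      rw [projIcc_of_mem _ ht'mem]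
    have ht'u : u < t' := by nlinarith
    rw [hinner, squeezeConj, if_neg (by simpa [hπt'] using not_le.2 ht'u)]
    have hratio : ((((projIcc 0 1 zero_le_one t' : unitInterval) : ℝ)) - u) / (1 - u)
        = (q.2 : ℝ) := by
      rw [hπt', ht'def]
      field_simp
      ring
    have hπq2 : projIcc 0 1 zero_le_one
        ((((projIcc 0 1 zero_le_one t' : unitInterval) : ℝ) - u) / (1 - u)) = q.2 := by
      rw [hratio, projIcc_of_mem _ q.2.2]
    rw [hπq2]
    have hqq : ((q.1, q.2) : N × unitInterval) = q := rfl
    rw [hqq, hφq]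
    have hback : u + (1 - u) * (τ : ℝ) = (p.2 : ℝ) := by
      rw [hτ, hr]; field_simp; ring
    have : projIcc 0 1 zero_le_one (u + (1 - u) * (τ : ℝ)) = p.2 := by
      rw [hback, projIcc_of_mem _ p.2.2]
    rw [this]

theorem squeezeConj_cont {N : Type*} [TopologicalSpace N]
    (φ : (N × unitInterval) ≃ₜ N × unitInterval)
    (hφ0 : ∀ x : N, φ (x, 0) = (x, 0)) {c : ℝ} (hc0 : 0 ≤ c) (hc1 : c < 1) :
    Continuous (fun q : (N × unitInterval) × unitInterval =>
      squeezeConj φ ((q.2 : ℝ) * c) q.1) := by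
  have ht : Continuous (fun q : (N × unitInterval) × unitInterval => ((q.1.2 : ℝ))) :=
    continuous_subtype_val.comp (continuous_snd.comp continuous_fst)
  have hu : Continuous (fun q : (N × unitInterval) × unitInterval => ((q.2 : ℝ) * c)) :=
    (continuous_subtype_val.comp continuous_snd).mul continuous_const
  have hden : ∀ q : (N × unitInterval) × unitInterval, (1 : ℝ) - (q.2 : ℝ) * c ≠ 0 := by
    intro q
    have h1 : (q.2 : ℝ) * c ≤ c := by
      calc (q.2 : ℝ) * c ≤ 1 * c := mul_le_mul_of_nonneg_right q.2.2.2 hc0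
        _ = c := one_mul c
    intro hcon
    nlinarith
  have hr : Continuous (fun q : (N × unitInterval) × unitInterval =>
      (((q.1.2 : ℝ)) - (q.2 : ℝ) * c) / (1 - (q.2 : ℝ) * c)) :=
    (ht.sub hu).div (continuous_const.sub hu) hden
  have hinner : Continuous (fun q : (N × unitInterval) × unitInterval =>
      φ (q.1.1, projIcc 0 1 zero_le_one ((((q.1.2 : ℝ)) - (q.2 : ℝ) * c) / (1 - (q.2 : ℝ) * c)))) :=
    φ.continuous.comp ((continuous_fst.comp continuous_fst).prodMk
      (continuous_projIcc.comp hr))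
  show Continuous (fun q : (N × unitInterval) × unitInterval =>
    if ((q.1.2 : ℝ)) ≤ (q.2 : ℝ) * c then q.1
    else
      ((φ (q.1.1, projIcc 0 1 zero_le_one ((((q.1.2 : ℝ)) - (q.2 : ℝ) * c) / (1 - (q.2 : ℝ) * c)))).1,
        projIcc 0 1 zero_le_one
          ((q.2 : ℝ) * c + (1 - (q.2 : ℝ) * c) *
            ((φ (q.1.1, projIcc 0 1 zero_le_one ((((q.1.2 : ℝ)) - (q.2 : ℝ) * c) / (1 - (q.2 : ℝ) * c)))).2 : ℝ))))
  apply Continuous.if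
  · intro q hq
    have heq : ((q.1.2 : ℝ)) = (q.2 : ℝ) * c := frontier_le_subset_eq ht hu hq
    have hr0 : (((q.1.2 : ℝ)) - (q.2 : ℝ) * c) / (1 - (q.2 : ℝ) * c) = 0 := by
      rw [heq]; simp
    have hπ0 : projIcc 0 1 zero_le_one
        ((((q.1.2 : ℝ)) - (q.2 : ℝ) * c) / (1 - (q.2 : ℝ) * c)) = 0 := by
      rw [hr0]
      exact projIcc_of_mem _ (by norm_num)
    rw [hπ0, hφ0 q.1.1]
    have h2 : (q.2 : ℝ) * c + (1 - (q.2 : ℝ) * c) * (((0 : unitInterval) : ℝ)) = (q.1.2 : ℝ) := by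
      rw [show (((0 : unitInterval) : ℝ)) = (0 : ℝ) from rfl]
      rw [mul_zero, add_zero, heq]
    have h3 : projIcc 0 1 zero_le_one
        ((q.2 : ℝ) * c + (1 - (q.2 : ℝ) * c) * (((0 : unitInterval) : ℝ))) = q.1.2 := by
      rw [h2, projIcc_of_mem _ q.1.2.2]
    rw [h3]
  · exact continuous_fst
  · exact (continuous_fst.comp hinner).prodMk
      (continuous_projIcc.comp (hu.add ((continuous_const.sub hu).mul
        (continuous_subtype_val.comp (continuous_snd.comp hinner)))))

theorem squeezeConj_zero {N : Type*} [TopologicalSpace N]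
    (φ : (N × unitInterval) ≃ₜ N × unitInterval)
    (hφ0 : ∀ x : N, φ (x, 0) = (x, 0)) (p : N × unitInterval) :
    squeezeConj φ 0 p = φ p := by
  by_cases h : (p.2 : ℝ) ≤ 0
  · have hp2 : p.2 = 0 := le_antisymm (by exact_mod_cast h) p.2.2.1
    have hp : p = (p.1, 0) := by rw [← hp2]
    rw [squeezeConj, if_pos h, hp, hφ0]
  · rw [squeezeConj, if_neg h]
    have hr : (((p.2 : ℝ)) - 0) / (1 - 0) = (p.2 : ℝ) := by ring
    have hπ : projIcc 0 1 zero_le_one ((((p.2 : ℝ)) - 0) / (1 - 0)) = p.2 := by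
      rw [hr, projIcc_of_mem _ p.2.2]
    rw [hπ]
    have hp : ((p.1, p.2) : N × unitInterval) = p := rfl
    rw [hp]
    have h2 : (0 : ℝ) + (1 - 0) * (((φ p).2 : ℝ)) = ((φ p).2 : ℝ) := by ring
    have h3 : projIcc 0 1 zero_le_one ((0 : ℝ) + (1 - 0) * (((φ p).2 : ℝ))) = (φ p).2 := by
      rw [h2, projIcc_of_mem _ (φ p).2.2]
    rw [h3]

/-- The compression trick: if a pseudoisotopy `φ` of `N` (a homeomorphism of `N × [0,1]`
fixing `N × {0}`) can be compressed rel `N × {0}` into `N × (1−δ, 1]`, and `φ` moves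
points at most `δ` in the `N` coordinate, then the compression `φ'` can be chosen to move
points at most `ε δ` in `N × [0,1]`, where `ε δ → 0` as `δ → 0`. -/
theorem stmt12 {N : Type*} [MetricSpace N] [CompactSpace N] :
    ∃ ε : ℝ → ℝ, Tendsto ε (nhdsWithin 0 (Ioi 0)) (nhds 0) ∧
      ∀ δ > (0 : ℝ), ∀ φ : (N × unitInterval) ≃ₜ N × unitInterval,
        (∀ x : N, φ (x, 0) = (x, 0)) →
        (∃ (φ'' : (N × unitInterval) ≃ₜ N × unitInterval)
            (H : (N × unitInterval) × unitInterval → N × unitInterval),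
          IsotopyRelZero H (⇑φ) (⇑φ'') ∧
            ∀ p : N × unitInterval, (p.2 : ℝ) ≤ 1 - δ → φ'' p = p) →
        (∀ p : N × unitInterval, dist (φ p).1 p.1 ≤ δ) →
        ∃ (φ' : (N × unitInterval) ≃ₜ N × unitInterval)
            (H' : (N × unitInterval) × unitInterval → N × unitInterval),
          IsotopyRelZero H' (⇑φ) (⇑φ') ∧
          (∀ p : N × unitInterval, (p.2 : ℝ) ≤ 1 - δ → φ' p = p) ∧
          ∀ p : N × unitInterval, dist (φ' p) p ≤ ε δ := by
  refine ⟨id, tendsto_id.mono_left nhdsWithin_le_nhds, ?_⟩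
  intro δ hδ φ hφ0 _ hmove
  set c : ℝ := max (1 - δ) 0 with hcdef
  have hc0 : 0 ≤ c := le_max_right _ _
  have hc1 : c < 1 := max_lt (by linarith) one_pos
  have hcδ : 1 - δ ≤ c := le_max_left _ _
  have hsymm0 : ∀ x : N, φ.symm (x, 0) = (x, 0) := by
    intro x
    conv_lhs => rw [← hφ0 x]
    exact φ.symm_apply_apply _
  have husc : ∀ s : unitInterval, 0 ≤ (s : ℝ) * c := fun s => mul_nonneg s.2.1 hc0
  have husc1 : ∀ s : unitInterval, (s : ℝ) * c < 1 := by
    intro s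
    calc (s : ℝ) * c ≤ 1 * c := mul_le_mul_of_nonneg_right s.2.2 hc0
      _ = c := one_mul c
      _ < 1 := hc1
  have hli : ∀ (s : unitInterval) (p : N × unitInterval),
      squeezeConj φ.symm ((s : ℝ) * c) (squeezeConj φ ((s : ℝ) * c) p) = p := by
    intro s p
    have := squeezeConj_leftInv φ.symm hsymm0 (husc s) (husc1 s) p
    rwa [Homeomorph.symm_symm] at this
  have hri : ∀ (s : unitInterval) (p : N × unitInterval),
      squeezeConj φ ((s : ℝ) * c) (squeezeConj φ.symm ((s : ℝ) * c) p) = p :=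
    fun s p => squeezeConj_leftInv φ hφ0 (husc s) (husc1 s) p
  let E : unitInterval → (N × unitInterval) ≃ (N × unitInterval) := fun s =>
    { toFun := squeezeConj φ ((s : ℝ) * c)
      invFun := squeezeConj φ.symm ((s : ℝ) * c)
      left_inv := hli s
      right_inv := hri s }
  have hHcont : Continuous (fun q : (N × unitInterval) × unitInterval =>
      squeezeConj φ ((q.2 : ℝ) * c) q.1) := squeezeConj_cont φ hφ0 hc0 hc1
  have hEcont : ∀ s : unitInterval, Continuous (E s) :=
    fun s => hHcont.comp (continuous_id.prodMk continuous_const)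
  let Φ : unitInterval → (N × unitInterval) ≃ₜ (N × unitInterval) := fun s =>
    Continuous.homeoOfEquivCompactToT2 (f := E s) (hEcont s)
  refine ⟨Φ 1, fun q => squeezeConj φ ((q.2 : ℝ) * c) q.1, ⟨hHcont, ?_, ?_, ?_, ?_⟩, ?_, ?_⟩
  · intro s
    exact (Φ s).isHomeomorph
  · intro s x
    show squeezeConj φ ((s : ℝ) * c) (x, 0) = (x, 0)
    rw [squeezeConj, if_pos]
    show ((0 : unitInterval) : ℝ) ≤ (s : ℝ) * c
    rw [show ((0 : unitInterval) : ℝ) = (0 : ℝ) from rfl]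
    exact husc s
  · intro p
    show squeezeConj φ (((0 : unitInterval) : ℝ) * c) p = φ p
    rw [show ((0 : unitInterval) : ℝ) * c = 0 by norm_num]
    exact squeezeConj_zero φ hφ0 p
  · intro p
    rfl
  · intro p hp
    show squeezeConj φ (((1 : unitInterval) : ℝ) * c) p = p
    rw [squeezeConj, if_pos]
    rw [show ((1 : unitInterval) : ℝ) = (1 : ℝ) from rfl, one_mul]
    linarith
  · intro p
    show dist (squeezeConj φ (((1 : unitInterval) : ℝ) * c) p) p ≤ id δ
    rw [show ((1 : unitInterval) : ℝ) * c = c by norm_num]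
    by_cases h : (p.2 : ℝ) ≤ c
    · rw [squeezeConj, if_pos h, dist_self]
      exact hδ.le
    · push_neg at h
      rw [squeezeConj, if_neg (not_le.2 h), Prod.dist_eq]
      set τ : unitInterval := projIcc 0 1 zero_le_one (((p.2 : ℝ) - c) / (1 - c)) with hτdef
      apply max_le
      · exact hmove (p.1, τ)
      · rw [Subtype.dist_eq, Real.dist_eq, abs_le]
        set sg : ℝ := ((φ (p.1, τ)).2 : ℝ) with hsgdef
        have hsg0 : 0 ≤ sg := (φ (p.1, τ)).2.2.1
        have hsg1 : sg ≤ 1 := (φ (p.1, τ)).2.2.2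
        have hv : c + (1 - c) * sg ∈ Icc (0 : ℝ) 1 := ⟨by nlinarith, by nlinarith⟩
        have hπ : ((projIcc 0 1 zero_le_one (c + (1 - c) * sg) : unitInterval) : ℝ)
            = c + (1 - c) * sg := by rw [projIcc_of_mem _ hv]
        rw [hπ]
        have hp1 : (p.2 : ℝ) ≤ 1 := p.2.2.2
        have hv1 : c + (1 - c) * sg ≤ 1 := hv.2
        have hv2 : c ≤ c + (1 - c) * sg := by nlinarith
        simp only [id]
        constructor <;> linarith
end

section
/- If α : (0,1) → ℝ is continuous, and Φ : (0,1) → Homeo(ℝ) is given by Φ(t) = T_{α(t)}, translation by α(t), then the map (y,t) ↦ (y + α(t), t) is a homeomorphism of ℝ × (0,1); moreover if g : ℝ → ℝ is a homeomorphism with g(y) = y for y ≤ 0 and α(t) → ∞ as t → 0⁺, then the map F(y,t) = (T_{α(t)} ∘ g ∘ T_{−α(t)}(y), t) for t > 0, F(y,0) = (y,0), extends to a continuous map on any set ℝ_{≤c} × [0,1) → ℝ × [0,1) and is the identity on ℝ_{≤c} × {0} in the limit, for any fixed c: specifically, for each compact K ⊆ ℝ, F(y,t) → (y,0) uniformly on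 K as t → 0⁺. -/
open Set Filter

/-! The shear `(y, t) ↦ (y + α t, t)` is a homeomorphism with inverse `(y, t) ↦ (y - α t, t)`.
Since `g` fixes `(-∞, 0]`, the conjugate `y ↦ α t + g (y - α t)` fixes `(-∞, α t]`; once `α t`
exceeds an upper bound of the compact set `K`, the conjugate is the identity on `K`. -/

lemma isHomeomorph_add_fiberwise {G T : Type*} [TopologicalSpace G] [AddGroup G]
    [IsTopologicalAddGroup G] [TopologicalSpace T] {a : T → G} (ha : Continuous a) :
    IsHomeomorph fun p : G × T => (p.1 + a p.2, p.2) :=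
  Homeomorph.isHomeomorph
    { toFun := fun p => (p.1 + a p.2, p.2)
      invFun := fun p => (p.1 - a p.2, p.2)
      left_inv := fun p => by simp
      right_inv := fun p => by simp
      continuous_toFun := (continuous_fst.add (ha.comp continuous_snd)).prodMk continuous_snd
      continuous_invFun := (continuous_fst.sub (ha.comp continuous_snd)).prodMk continuous_snd }

section Conjugate

variable {G : Type*} [AddCommGroup G] [PartialOrder G] [IsOrderedAddMonoid G]
  {g : G → G}

lemma add_apply_sub_eq_self_of_le (hg : ∀ y ≤ 0, g y = y) {a y : G} (h : y ≤ a) :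
    a + g (y - a) = y := by
  rw [hg _ (sub_nonpos.mpr h), add_sub_cancel]

lemma eventually_eqOn_add_apply_sub_id {ι : Type*} {l : Filter ι} {α : ι → G}
    (hα : Tendsto α l atTop) (hg : ∀ y ≤ 0, g y = y) {K : Set G} (hK : BddAbove K) :
    ∀ᶠ t in l, EqOn (fun y => α t + g (y - α t)) id K := by
  obtain ⟨c, hc⟩ := hK
  filter_upwards [hα.eventually_ge_atTop c] with t ht y hy
  exact add_apply_sub_eq_self_of_le hg ((hc hy).trans ht)

end Conjugate

lemma tendstoUniformlyOn_of_eventually_eqOn {ι α β : Type*} [UniformSpace β] {F : ι → α → β}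
    {f : α → β} {p : Filter ι} {s : Set α} (h : ∀ᶠ i in p, EqOn (F i) f s) :
    TendstoUniformlyOn F f p s := fun _u hu =>
  h.mono fun _i hi _x hx => by rw [hi hx]; exact refl_mem_uniformity hu

/-- (1) For continuous `α`, `(y,t) ↦ (y + α t, t)` is a homeomorphism of `ℝ × (0,1)`.
(2) If `g : ℝ → ℝ` is a homeomorphism with `g y = y` for `y ≤ 0` and `α(t) → ∞` as
`t → 0⁺`, then the conjugated maps `y ↦ α t + g (y − α t)` converge to the identity
uniformly on every compact subset of `ℝ` as `t → 0⁺`; hence the assembled map `F`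
extends continuously by the identity at `t = 0`. -/
theorem stmt18 (α : ℝ → ℝ) (hα : ContinuousOn α (Ioo 0 1))
    (g : ℝ ≃ₜ ℝ) (hg : ∀ y : ℝ, y ≤ 0 → g y = y)
    (hαtop : Tendsto α (nhdsWithin 0 (Ioi 0)) atTop) :
    IsHomeomorph (fun p : ℝ × (Ioo (0 : ℝ) 1) =>
      ((p.1 + α p.2, p.2) : ℝ × (Ioo (0 : ℝ) 1))) ∧
    ∀ K : Set ℝ, IsCompact K →
      TendstoUniformlyOn (fun t : ℝ => fun y : ℝ => α t + g (y - α t)) id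
        (nhdsWithin 0 (Ioi 0)) K :=
  ⟨isHomeomorph_add_fiberwise (hα.comp_continuous continuous_subtype_val Subtype.property),
    fun _K hK => tendstoUniformlyOn_of_eventually_eqOn
      (eventually_eqOn_add_apply_sub_id hαtop hg hK.bddAbove)⟩
end
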